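/- For n ≥ 5, the automaton ℋ_n is synchronizing, the word b (a b^{n-2})^{n-3} a b of length n² - 4n + 6 is a reset word, and the reset threshold of ℋ_n is exactly n² - 4n + 6. -/

import Mathlib

/-- The state reached from `q` by reading the word `w`. -/
def run {Q A : Type*} (δ : Q → A → Q) (q : Q) (w : List A) : Q := w.foldl δ q

/-- The automaton `ℋ_n` on states `0,…,n-1` (paper's `1,…,n` shifted by one):
the letter `a` (= `true`) swaps `0` and `n-1` and fixes all other states;
the letter `b` (= `false`) sends `i ↦ i+1` for `i < n-2`, `n-2 ↦ 0`, `n-1 ↦ 2`. -/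
def hAut (n : ℕ) (q : ZMod n) : Bool → ZMod n
  | true =>
      if q.val = 0 then ((n - 1 : ℕ) : ZMod n) else if q.val = n - 1 then 0 else q
  | false =>
      if q.val = n - 2 then 0 else if q.val = n - 1 then 2 else q + 1

/-!
Since `a` acts as an involution, deleting a leading or trailing `a` or a factor `aa` turns a
reset word into a shorter one, so a shortest reset word is `b` followed by a word over `b` and
`c = ab`. After the first `b` only the cycle `{0, …, n-2}` is occupied, and on it `b` and `c` act
as the Wielandt automaton on `ZMod (n-1)`: `b` rotates, `c` rotates but sends `0` to `2`.
Measured against a target that moves one step per letter, every state keeps its distance except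
the state at `0` under `c`, which gains one step. The state that starts one step behind must
therefore be at `0` when `c` is read `n - 2` times, and in between it has to go round the whole
cycle; this costs at least `(n-3)(n-1) + 2` letters `a, b` after the initial `b`. The word
`b (a b^{n-2})^{n-3} a b` attains the bound: each block `a b^{n-2}` lowers every cycle state
by one, stopping at `0`.
-/

open Function

section Run

variable {Q Q' A B : Type*} {δ : Q → A → Q}

@[simp]
lemma run_nil (q : Q) : run δ q [] = q := rfl

@[simp]
lemma run_cons (q : Q) (x : A) (w : List A) : run δ q (x :: w) = run δ (δ q x) w := rfl

@[simp]
lemma run_append (q : Q) (u v : List A) : run δ q (u ++ v) = run δ (run δ q u) v :=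
  List.foldl_append ..

lemma map_run {δ' : Q' → A → Q'} (f : Q → Q') (hf : ∀ q x, f (δ q x) = δ' (f q) x)
    (q : Q) (w : List A) : f (run δ q w) = run δ' (f q) w := by
  induction w generalizing q with
  | nil => rfl
  | cons x w ih => rw [run_cons, run_cons, ih, hf]

lemma map_run_flatMap {δ' : Q' → B → Q'} (P : Q → Prop) (f : Q → Q') (σ : B → List A)
    (hP : ∀ q x, P q → P (run δ q (σ x))) (hf : ∀ q x, P q → f (run δ q (σ x)) = δ' (f q) x)
    (u : List B) {q : Q} (hq : P q) : f (run δ q (u.flatMap σ)) = run δ' (f q) u := by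
  induction u generalizing q with
  | nil => rfl
  | cons x u ih => rw [List.flatMap_cons, run_append, ih (hP q x hq), hf q x hq, run_cons]

end Run

def IsResetWord {Q A : Type*} (δ : Q → A → Q) (w : List A) : Prop :=
  ∃ p, ∀ q, run δ q w = p

namespace IsResetWord

variable {Q A : Type*} {δ : Q → A → Q} {x : A} {s t w : List A}

lemma not_nil [Nontrivial Q] : ¬ IsResetWord δ [] := fun ⟨_, hp⟩ =>
  let ⟨q, q', h⟩ := exists_pair_ne Q
  h ((hp q).trans (hp q').symm)

lemma of_cons (hx : Surjective (δ · x)) (h : IsResetWord δ (x :: w)) : IsResetWord δ w := by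
  obtain ⟨p, hp⟩ := h
  refine ⟨p, fun q => ?_⟩
  obtain ⟨q, rfl⟩ := hx q
  exact hp q

lemma of_append_singleton (hx : Involutive (δ · x)) (h : IsResetWord δ (w ++ [x])) :
    IsResetWord δ w := by
  obtain ⟨p, hp⟩ := h
  exact ⟨δ p x, fun q => by rw [← hp q, run_append, run_cons, run_nil]; exact (hx _).symm⟩

lemma of_append_pair (hx : Involutive (δ · x)) (h : IsResetWord δ (s ++ [x, x] ++ t)) :
    IsResetWord δ (s ++ t) := by
  obtain ⟨p, hp⟩ := h
  have hx' : ∀ q, δ (δ q x) x = q := hx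
  exact ⟨p, fun q => by rw [← hp q]; simp only [run_append, run_cons, run_nil, hx']⟩

end IsResetWord

/-- The letters `b = false` and `c = true` of the rewritten alphabet, spelled over `{a, b}`. -/
def block : Bool → List Bool
  | false => [false]
  | true => [true, false]

lemma exists_eq_flatMap_block :
    ∀ w : List Bool, ¬ [true, true] <:+: w → ¬ [true] <:+ w → ∃ u : List Bool, w = u.flatMap block
  | [], _, _ => ⟨[], rfl⟩
  | false :: w, h₁, h₂ =>
    let ⟨u, hu⟩ := exists_eq_flatMap_block w (fun h => h₁ (List.infix_cons h))
      (fun h => h₂ (h.trans (List.suffix_cons _ _)))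
    ⟨false :: u, by simp [hu, block]⟩
  | [true], _, h₂ => absurd (List.suffix_refl _) h₂
  | true :: true :: w, h₁, _ => absurd (List.prefix_append [true, true] w).isInfix h₁
  | true :: false :: w, h₁, h₂ =>
    let ⟨u, hu⟩ := exists_eq_flatMap_block w (fun h => h₁ (List.infix_cons (List.infix_cons h)))
      (fun h => h₂ ((h.trans (List.suffix_cons _ _)).trans (List.suffix_cons _ _)))
    ⟨true :: u, by simp [hu, block]⟩

theorem IsResetWord.exists_flatMap_block {Q : Type*} [Nontrivial Q] {δ : Q → Bool → Q}
    (hδ : Involutive (δ · true)) {w : List Bool} (hw : IsResetWord δ w) :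
    ∃ u : List Bool, IsResetWord δ (false :: u.flatMap block) ∧
      (false :: u.flatMap block).length ≤ w.length := by
  induction h : w.length using Nat.strong_induction_on generalizing w with
  | _ N ih =>
  subst h
  by_cases h₁ : [true, true] <:+: w
  · obtain ⟨s, t, rfl⟩ := h₁
    obtain ⟨u, hu, hl⟩ := ih _ (by simp) (hw.of_append_pair hδ) rfl
    exact ⟨u, hu, hl.trans (by simp; omega)⟩
  by_cases h₂ : [true] <:+ w
  · obtain ⟨s, rfl⟩ := h₂
    obtain ⟨u, hu, hl⟩ := ih _ (by simp) (hw.of_append_singleton hδ) rfl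
    exact ⟨u, hu, hl.trans (by simp)⟩
  obtain ⟨u, rfl⟩ := exists_eq_flatMap_block w h₁ h₂
  match u, hw with
  | [], hw => exact absurd hw IsResetWord.not_nil
  | false :: u, hw => exact ⟨u, hw, le_rfl⟩
  | true :: u, hw => exact ⟨u, hw.of_cons hδ.surjective, by simp [block]⟩

/-- The automaton `𝒲_m`, on which `ℋ_{m+1}` acts over `b` and `c = ab`. -/
def wielandt (m : ℕ) (q : ZMod m) : Bool → ZMod m
  | false => q + 1
  | true => if q = 0 then 2 else q + 1

/-- The target `φ` advances with every letter and `q` lies `(φ - q).val` steps behind it; only `c`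
read at `0` closes the gap, by one, and `q` reaches `0` after `(-q).val` letters. This bounds
the number of letters `a, b` needed to bring `q` onto the target. -/
def potential (m : ℕ) (φ q : ZMod m) : ℕ :=
  if q = φ then 0 else ((φ - q).val - 1) * m + (-q).val + 2

section Wielandt

variable {m : ℕ}

lemma val_le_val_sub_one_add_one (z : ZMod m) : z.val ≤ (z - 1).val + 1 :=
  calc z.val = (z - 1 + 1).val := by rw [sub_add_cancel]
    _ ≤ (z - 1).val + (1 : ZMod m).val := ZMod.val_add_le _ _
    _ ≤ (z - 1).val + 1 := by rw [ZMod.val_one_eq_one_mod]; gcongr; exact Nat.mod_le 1 m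

lemma potential_le_potential_add_one (φ q : ZMod m) :
    potential m φ q ≤ 1 + potential m (φ + 1) (q + 1) := by
  have := val_le_val_sub_one_add_one (-q)
  unfold potential
  simp only [add_left_inj, add_sub_add_right_eq_sub, neg_add']
  split_ifs <;> omega

lemma potential_zero_le (hm : 3 ≤ m) (φ : ZMod m) :
    potential m φ 0 ≤ 2 + potential m (φ + 1) 2 := by
  have : Fact (1 < m) := ⟨by omega⟩
  unfold potential
  rcases eq_or_ne φ 0 with rfl | h₀
  · simp
  rcases eq_or_ne φ 1 with rfl | h₁
  · simp [ZMod.val_one]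
  have hφ : 2 ≤ φ.val := by
    have := (ZMod.val_ne_zero φ).mpr h₀
    have : φ.val ≠ 1 := fun h => h₁ (ZMod.val_injective m (by rw [h, ZMod.val_one]))
    omega
  have h₂ : (2 : ZMod m) ≠ φ + 1 := fun h => h₁ (by linear_combination -h)
  have hsub : (φ + 1 - 2).val = φ.val - 1 := by
    rw [show φ + 1 - 2 = φ - 1 by ring, ZMod.val_sub (by rw [ZMod.val_one]; omega), ZMod.val_one]
  have hneg : (-2 : ZMod m).val = m - 2 := by
    rw [ZMod.neg_val', ZMod.val_two_eq_two_mod, Nat.mod_eq_of_lt (by omega : 2 < m),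
      Nat.mod_eq_of_lt (by omega)]
  rw [if_neg (Ne.symm h₀), if_neg h₂, hsub, hneg, sub_zero, neg_zero, ZMod.val_zero]
  obtain ⟨k, hk⟩ : ∃ k, φ.val = k + 2 := ⟨φ.val - 2, by omega⟩
  rw [hk, show k + 2 - 1 - 1 = k by omega, show k + 2 - 1 = k + 1 by omega, add_one_mul]
  omega

lemma potential_le_length_block_add (hm : 3 ≤ m) (φ q : ZMod m) (x : Bool) :
    potential m φ q ≤ (block x).length + potential m (φ + 1) (wielandt m q x) := by
  cases x with
  | false => exact potential_le_potential_add_one φ q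
  | true =>
    by_cases hq : q = 0
    · subst hq
      simpa [wielandt, block] using potential_zero_le hm φ
    · rw [wielandt, if_neg hq]
      exact (potential_le_potential_add_one φ q).trans (by simp [block])

lemma potential_le_length_flatMap_block (hm : 3 ≤ m) {q g : ZMod m} {u : List Bool}
    (h : run (wielandt m) q u = g) : potential m (g - u.length) q ≤ (u.flatMap block).length := by
  induction u generalizing q with
  | nil => simp [potential, ← h]
  | cons x u ih =>
    calc potential m (g - (x :: u).length) q
        ≤ (block x).length + potential m (g - (x :: u).length + 1) (wielandt m q x) :=
          potential_le_length_block_add hm _ q x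
      _ = (block x).length + potential m (g - u.length) (wielandt m q x) := by
          push_cast [List.length_cons]; ring_nf
      _ ≤ (block x).length + (u.flatMap block).length := by gcongr; exact ih h
      _ = ((x :: u).flatMap block).length := by simp

theorem IsResetWord.length_flatMap_block_ge (hm : 3 ≤ m) {u : List Bool}
    (h : IsResetWord (wielandt m) u) : (m - 2) * m + 2 ≤ (u.flatMap block).length := by
  obtain ⟨g, hg⟩ := h
  set φ : ZMod m := g - u.length
  have : Fact (1 < m) := ⟨by omega⟩
  have hfar : (φ - (φ + 1)).val = m - 1 := by
    rw [show φ - (φ + 1) = -1 by ring, ZMod.neg_val', ZMod.val_one, Nat.mod_eq_of_lt (by omega)]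
  calc (m - 2) * m + 2 ≤ potential m φ (φ + 1) := by
        rw [potential, if_neg (by simp), hfar, show m - 1 - 1 = m - 2 by omega]
        omega
    _ ≤ (u.flatMap block).length := potential_le_length_flatMap_block hm (hg _)

end Wielandt

def hAutNat (n v : ℕ) : Bool → ℕ
  | true => if v = 0 then n - 1 else if v = n - 1 then 0 else v
  | false => if v = n - 2 then 0 else if v = n - 1 then 2 else v + 1

section hAut

variable {n : ℕ}

lemma val_hAut (hn : 3 ≤ n) (q : ZMod n) (x : Bool) : (hAut n q x).val = hAutNat n q.val x := by
  have : Fact (1 < n) := ⟨by omega⟩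
  have := ZMod.val_lt q
  cases x <;> simp only [hAut, hAutNat] <;> split_ifs
  all_goals first
    | simp [*]
    | rw [ZMod.val_two_eq_two_mod, Nat.mod_eq_of_lt hn]
    | rw [ZMod.val_add_of_lt] <;> simp [ZMod.val_one]; omega

lemma hAut_true_involutive (hn : 3 ≤ n) : Involutive (hAut n · true) := by
  have : NeZero n := ⟨by omega⟩
  intro q
  have := ZMod.val_lt q
  apply ZMod.val_injective
  simp only [val_hAut hn, hAutNat]
  split_ifs <;> omega

lemma val_run_hAut (hn : 3 ≤ n) (q : ZMod n) (w : List Bool) :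
    (run (hAut n) q w).val = run (hAutNat n) q.val w :=
  map_run _ (val_hAut hn) q w

lemma hAutNat_false_of_lt {v : ℕ} (hv : v < n - 1) : hAutNat n v false = (v + 1) % (n - 1) := by
  simp only [hAutNat]
  split_ifs
  · rw [show v + 1 = n - 1 by omega, Nat.mod_self]
  · omega
  · rw [Nat.mod_eq_of_lt (by omega)]

lemma run_hAutNat_block {v : ℕ} (hv : v < n - 1) (x : Bool) :
    run (hAutNat n) v (block x) = if x ∧ v = 0 then 2 else (v + 1) % (n - 1) := by
  cases x
  · simp [block, hAutNat_false_of_lt hv]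
  · by_cases hv₀ : v = 0
    · simp [block, hAutNat, hv₀]; omega
    · have : hAutNat n v true = v := by simp only [hAutNat]; split_ifs <;> omega
      simp [block, this, hAutNat_false_of_lt hv, hv₀]

theorem IsResetWord.wielandt_of_hAut (hn : 4 ≤ n) {u : List Bool}
    (h : IsResetWord (hAut n) (false :: u.flatMap block)) : IsResetWord (wielandt (n - 1)) u := by
  have : NeZero (n - 1) := ⟨by omega⟩
  obtain ⟨p, hp⟩ := h
  have hsim : ∀ v < n - 1, ((run (hAutNat n) v (u.flatMap block) : ℕ) : ZMod (n - 1)) =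
      run (wielandt (n - 1)) (v : ZMod (n - 1)) u := by
    refine fun v hv => map_run_flatMap (· < n - 1) _ block (fun v x hv => ?_) (fun v x hv => ?_) u hv
    · rw [run_hAutNat_block hv]
      split_ifs
      · omega
      · exact Nat.mod_lt _ (by omega)
    · have hv₀ : (v : ZMod (n - 1)) = 0 ↔ v = 0 := by
        rw [ZMod.natCast_eq_zero_iff]
        exact ⟨fun h => Nat.eq_zero_of_dvd_of_lt h hv, fun h => h ▸ dvd_zero _⟩
      cases x <;> simp [run_hAutNat_block hv, wielandt, hv₀]
  refine ⟨(p.val : ZMod (n - 1)), fun q => ?_⟩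
  set v := (q - 1).val
  have hv : v < n - 1 := ZMod.val_lt _
  have hv' : v < n := by omega
  calc run (wielandt (n - 1)) q u
      = run (wielandt (n - 1)) ((hAutNat n v false : ℕ) : ZMod (n - 1)) u := by
        rw [hAutNat_false_of_lt hv, ZMod.natCast_mod]; push_cast; simp [v]
    _ = ((run (hAutNat n) (hAutNat n v false) (u.flatMap block) : ℕ) : ZMod (n - 1)) := by
        rw [← hsim _ (by rw [hAutNat_false_of_lt hv]; exact Nat.mod_lt _ (by omega))]
    _ = ((run (hAut n) (v : ZMod n) (false :: u.flatMap block)).val : ZMod (n - 1)) := by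
        rw [val_run_hAut (by omega), ZMod.val_cast_of_lt hv', run_cons]
    _ = p.val := by rw [hp]

end hAut

def resetWord (n : ℕ) : List Bool :=
  false :: ((List.replicate (n - 3) (true :: List.replicate (n - 2) false)).flatten ++ [true, false])

section ResetWord

variable {n : ℕ}

lemma sq_sub_four_mul_add_six (hn : 4 ≤ n) : n ^ 2 - 4 * n + 6 = (n - 3) * (n - 1) + 3 := by
  obtain ⟨k, rfl⟩ : ∃ k, n = k + 4 := ⟨n - 4, by omega⟩
  rw [show k + 4 - 3 = k + 1 by omega, show k + 4 - 1 = k + 3 by omega]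
  ring_nf
  omega

lemma length_resetWord (hn : 4 ≤ n) : (resetWord n).length = n ^ 2 - 4 * n + 6 := by
  rw [sq_sub_four_mul_add_six hn, show n - 1 = n - 2 + 1 by omega]
  simp [resetWord, List.sum_replicate]

lemma run_hAutNat_replicate_false {v : ℕ} (hv : v < n - 1) (k : ℕ) :
    run (hAutNat n) v (List.replicate k false) = (v + k) % (n - 1) := by
  induction k generalizing v with
  | zero => simp [Nat.mod_eq_of_lt hv]
  | succ k ih =>
    rw [List.replicate_succ, run_cons, hAutNat_false_of_lt hv, ih (Nat.mod_lt _ (by omega)),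
      Nat.mod_add_mod, Nat.add_right_comm, Nat.add_assoc]

lemma run_hAutNat_aBlock (hn : 4 ≤ n) {v : ℕ} (hv : v < n - 1) :
    run (hAutNat n) v (true :: List.replicate (n - 2) false) = v - 1 := by
  rcases Nat.eq_zero_or_pos v with rfl | hv₀
  · rw [show n - 2 = n - 3 + 1 by omega, List.replicate_succ]
    have : hAutNat n (hAutNat n 0 true) false = 2 := by simp [hAutNat]; omega
    rw [run_cons, run_cons, this, run_hAutNat_replicate_false (by omega),
      show 2 + (n - 3) = n - 1 by omega, Nat.mod_self]
  · have : hAutNat n v true = v := by simp only [hAutNat]; split_ifs <;> omega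
    rw [run_cons, this, run_hAutNat_replicate_false hv, show v + (n - 2) = v - 1 + (n - 1) by omega,
      Nat.add_mod_right, Nat.mod_eq_of_lt (by omega)]

lemma run_hAutNat_aBlocks (hn : 4 ≤ n) {v : ℕ} (hv : v < n - 1) (j : ℕ) :
    run (hAutNat n) v (List.replicate j (true :: List.replicate (n - 2) false)).flatten = v - j := by
  induction j generalizing v with
  | zero => simp
  | succ j ih =>
    rw [List.replicate_succ, List.flatten_cons, run_append, run_hAutNat_aBlock hn hv,
      ih (by omega)]
    omega

lemma run_hAut_resetWord (hn : 4 ≤ n) (q : ZMod n) : run (hAut n) q (resetWord n) = 2 := by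
  have : NeZero n := ⟨by omega⟩
  apply ZMod.val_injective
  have hq := ZMod.val_lt q
  have hb : hAutNat n q.val false < n - 1 := by simp only [hAutNat]; split_ifs <;> omega
  rw [val_run_hAut (by omega), resetWord, run_cons, run_append, run_hAutNat_aBlocks hn hb,
    ZMod.val_two_eq_two_mod, Nat.mod_eq_of_lt (by omega)]
  obtain h | h : hAutNat n q.val false - (n - 3) = 0 ∨ hAutNat n q.val false - (n - 3) = 1 := by
    omega
  all_goals rw [h]; simp only [run_cons, run_nil, hAutNat]; split_ifs <;> omega

end ResetWord

/-- For `n ≥ 5`, the automaton `ℋ_n` is synchronizing, the word `b (a b^{n-2})^{n-3} a b`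
of length `n² - 4n + 6` is a reset word for it, and its reset threshold is exactly
`n² - 4n + 6`. -/
theorem stmt_11 (n : ℕ) (hn : 5 ≤ n) :
    let w : List Bool := false ::
      ((List.replicate (n - 3) (true :: List.replicate (n - 2) false)).flatten
        ++ [true, false])
    w.length = n ^ 2 - 4 * n + 6 ∧
    (∃ p : ZMod n, ∀ q, run (hAut n) q w = p) ∧
    (∀ v : List Bool, (∃ p : ZMod n, ∀ q, run (hAut n) q v = p) →
      n ^ 2 - 4 * n + 6 ≤ v.length) := by
  intro w
  refine ⟨length_resetWord (by omega), ⟨2, run_hAut_resetWord (by omega)⟩, fun v hv => ?_⟩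
  have : Fact (1 < n) := ⟨by omega⟩
  obtain ⟨u, hu, hlen⟩ := IsResetWord.exists_flatMap_block (hAut_true_involutive (by omega)) hv
  have hcost := (hu.wielandt_of_hAut (by omega)).length_flatMap_block_ge (by omega)
  rw [List.length_cons, show n - 1 - 2 = n - 3 by omega] at *
  rw [sq_sub_four_mul_add_six (by omega)]
  omega
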